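/- Let X → Z and Y → Z be functors p and q between categories (or ∞-categories) with a functor f : X → Y over Z, such that p and q are coCartesian fibrations, f carries p-coCartesian morphisms to q-coCartesian morphisms, and for each object z of Z the induced functor f_z : X_z → Y_z on fibers is a coCartesian fibration. If for every morphism φ : z → z' in Z the induced pushforward functor φ_! : X_z → X_{z'} carries f_z-coCartesian morphisms to f_{z'}-coCartesian morphisms, then f is a coCartesian fibration. -/

import Mathlib

/-!
Lift `g₀ : f x ⟶ T` in two steps: a `p`-cocartesian lift `χ₀` of its image in `Z`, whose image
under `f` is `q`-cocartesian, followed by a fiberwise `f`-cocartesian lift `ψ` of the remaining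
vertical part. Both are `f`-cocartesian, hence so is `χ₀ ≫ ψ`. For `ψ`, a map out of its source is
split along `p`-cocartesian lifts into a base change and a vertical part; pushing `ψ` forward along
that base change gives a morphism `ψ'` which is fiberwise cocartesian by assumption, and the
universal property of `ψ` reduces to that of `ψ'`.
-/

open CategoryTheory

namespace CocartesianFibration

variable {A B : Type*} [Category A] [Category B]

/-- A morphism `φ : a ⟶ b` is (strongly) cocartesian with respect to a functor `F : A ⥤ B`
if every morphism `τ : a ⟶ c` whose image factors through `F.map φ` admits a unique
compatible lift `b ⟶ c`. -/
def Cocart (F : A ⥤ B) {a b : A} (φ : a ⟶ b) : Prop :=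
  ∀ (c : A) (τ : a ⟶ c) (g : F.obj b ⟶ F.obj c), F.map φ ≫ g = F.map τ →
    ∃! ζ : b ⟶ c, F.map ζ = g ∧ φ ≫ ζ = τ

/-- A functor `F : A ⥤ B` is a cocartesian fibration if every morphism of `B` starting at
the image of an object admits a cocartesian lift. -/
def CocartFib (F : A ⥤ B) : Prop :=
  ∀ (a : A) (T : B) (g : F.obj a ⟶ T),
    ∃ (b : A) (φ : a ⟶ b) (h : F.obj b = T), Cocart F φ ∧ F.map φ ≫ eqToHom h = g

/-- A morphism is vertical with respect to `F` if it lies in a fiber of `F`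
(its image is an identity). -/
def Vert (F : A ⥤ B) {a a' : A} (ψ : a ⟶ a') : Prop :=
  ∃ h : F.obj a = F.obj a', F.map ψ = eqToHom h

variable {X Y Z : Type*} [Category X] [Category Y] [Category Z]

/-- Given `p : X ⥤ Z`, `q : Y ⥤ Z` and `f : X ⥤ Y` over `Z`, a vertical morphism
`ψ : x ⟶ x'` of `X` (lying in the fiber `X_z`) is fiberwise `f`-cocartesian if it is
cocartesian for the induced functor `f_z : X_z ⥤ Y_z` on fibers. -/
def FiberCocart (p : X ⥤ Z) (q : Y ⥤ Z) (f : X ⥤ Y) {x x' : X} (ψ : x ⟶ x') : Prop :=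
  Vert p ψ ∧
  ∀ (x'' : X) (τ : x ⟶ x''), Vert p τ →
    ∀ (χ : f.obj x' ⟶ f.obj x''), Vert q χ → f.map ψ ≫ χ = f.map τ →
      ∃! ζ : x' ⟶ x'', Vert p ζ ∧ f.map ζ = χ ∧ ψ ≫ ζ = τ

/-- The induced functor `f_z : X_z ⥤ Y_z` on each fiber is a cocartesian fibration:
every vertical morphism of `Y` out of `f.obj x` admits a fiberwise `f`-cocartesian lift. -/
def FiberwiseCocartFib (p : X ⥤ Z) (q : Y ⥤ Z) (f : X ⥤ Y) : Prop :=
  ∀ (x : X) (y : Y) (g : f.obj x ⟶ y), Vert q g →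
    ∃ (x' : X) (ψ : x ⟶ x') (h : f.obj x' = y),
      FiberCocart p q f ψ ∧ f.map ψ ≫ eqToHom h = g

end CocartesianFibration

namespace CocartesianFibration

section General

variable {A B C : Type*} [Category A] [Category B] [Category C] {F : A ⥤ B}

theorem Vert.map_eq {a b : A} {u u' : a ⟶ b} (hu : Vert F u) (hu' : Vert F u') :
    F.map u = F.map u' := by
  rw [hu.2, hu'.2]

theorem Vert.comp {a b c : A} {u : a ⟶ b} {v : b ⟶ c} (hu : Vert F u) (hv : Vert F v) :
    Vert F (u ≫ v) :=
  ⟨hu.1.trans hv.1, by rw [F.map_comp, hu.2, hv.2, eqToHom_trans]⟩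

theorem Cocart.hom_ext {a b c : A} {φ : a ⟶ b} (hφ : Cocart F φ) {u u' : b ⟶ c}
    (hF : F.map u = F.map u') (h : φ ≫ u = φ ≫ u') : u = u' := by
  obtain ⟨ζ, -, hζ⟩ := hφ c (φ ≫ u) (F.map u) (F.map_comp _ _).symm
  exact (hζ u ⟨rfl, rfl⟩).trans (hζ u' ⟨hF.symm, h.symm⟩).symm

theorem Cocart.exists_vert_comp_eq {a b c : A} {φ : a ⟶ b} (hφ : Cocart F φ) (τ : a ⟶ c)
    (h : F.obj b = F.obj c) (hτ : F.map φ ≫ eqToHom h = F.map τ) :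
    ∃ w : b ⟶ c, Vert F w ∧ φ ≫ w = τ := by
  obtain ⟨w, ⟨hw, hφw⟩, -⟩ := hφ c τ _ hτ
  exact ⟨w, ⟨h, hw⟩, hφw⟩

theorem Cocart.comp {a b c : A} {φ : a ⟶ b} {ψ : b ⟶ c} (hφ : Cocart F φ) (hψ : Cocart F ψ) :
    Cocart F (φ ≫ ψ) := by
  intro d τ g hg
  rw [F.map_comp, Category.assoc] at hg
  obtain ⟨ζ₁, ⟨hζ₁, hφζ₁⟩, -⟩ := hφ d τ (F.map ψ ≫ g) hg
  obtain ⟨ζ, ⟨hζ, hψζ⟩, -⟩ := hψ d ζ₁ g hζ₁.symm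
  refine ⟨ζ, ⟨hζ, by rw [Category.assoc, hψζ, hφζ₁]⟩, fun ζ' ⟨hζ', hφψζ'⟩ => ?_⟩
  have hψζ' : ψ ≫ ζ' = ζ₁ :=
    hφ.hom_ext (by rw [F.map_comp, hζ', hζ₁]) (by rw [hφζ₁, ← Category.assoc, hφψζ'])
  exact hψ.hom_ext (hζ'.trans hζ.symm) (hψζ'.trans hψζ.symm)

theorem CocartFib.exists_cocart_comp_vert (hF : CocartFib F) {a c : A} (τ : a ⟶ c) :
    ∃ (b : A) (χ : a ⟶ b) (w : b ⟶ c), Cocart F χ ∧ Vert F w ∧ χ ≫ w = τ := by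
  obtain ⟨b, χ, h, hχ, hχτ⟩ := hF a (F.obj c) (F.map τ)
  obtain ⟨w, hw, hχw⟩ := hχ.exists_vert_comp_eq τ h hχτ
  exact ⟨b, χ, w, hχ, hw, hχw⟩

theorem cocart_of_cocart_comp {G : B ⥤ C} {a b : A} {φ : a ⟶ b} (hφ : Cocart (F ⋙ G) φ)
    (hFφ : Cocart G (F.map φ)) : Cocart F φ := by
  intro c τ g hg
  obtain ⟨ζ, ⟨hζG, hφζ⟩, hζ⟩ :=
    hφ c τ (G.map g) (by rw [Functor.comp_map, ← G.map_comp, hg]; rfl)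
  have hFζ : F.map ζ = g := hFφ.hom_ext hζG (by rw [← F.map_comp, hφζ, hg])
  exact ⟨ζ, ⟨hFζ, hφζ⟩, fun ζ' ⟨hζ'F, hφζ'⟩ => hζ ζ' ⟨by rw [Functor.comp_map, hζ'F], hφζ'⟩⟩

end General

section OverBase

variable {X Y Z : Type*} [Category X] [Category Y] [Category Z]

/-- `φ_!` is encoded morphism-wise: it sends a vertical `ψ` to the vertical `ψ'` closing a square
with two `p`-cocartesian morphisms over `φ`. -/
def PushforwardPreservesFiberCocart (p : X ⥤ Z) (q : Y ⥤ Z) (f : X ⥤ Y) : Prop :=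
  ∀ {x₁ x₂ y₁ y₂ : X} (ψ : x₁ ⟶ x₂) (χ₁ : x₁ ⟶ y₁) (χ₂ : x₂ ⟶ y₂) (ψ' : y₁ ⟶ y₂),
    FiberCocart p q f ψ → Cocart p χ₁ → Cocart p χ₂ → Vert p ψ' →
      ψ ≫ χ₂ = χ₁ ≫ ψ' → FiberCocart p q f ψ'

variable {q : Y ⥤ Z} {f : X ⥤ Y}

theorem cocart_of_fiberCocart (hp : CocartFib (f ⋙ q))
    (hf : ∀ {a b : X} (φ : a ⟶ b), Cocart (f ⋙ q) φ → Cocart q (f.map φ))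
    (hpush : PushforwardPreservesFiberCocart (f ⋙ q) q f) {x₁ x₂ : X} {ψ : x₁ ⟶ x₂}
    (hψ : FiberCocart (f ⋙ q) q f ψ) : Cocart f ψ := by
  intro c τ g hg
  -- the square `χ₁ ≫ ψ' = ψ ≫ χ₂` is the pushforward of `ψ` along the image of `g` in `Z`
  obtain ⟨m', χ₂, hm', hχ₂, hχ₂g⟩ := hp x₂ (q.obj (f.obj c)) (q.map g)
  obtain ⟨m, χ₁, ψ', hχ₁, hψ', hsq⟩ := hp.exists_cocart_comp_vert (ψ ≫ χ₂)
  have hψ'f : FiberCocart (f ⋙ q) q f ψ' := hpush ψ χ₁ χ₂ ψ' hψ hχ₁ hχ₂ hψ' hsq.symm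
  have hτ : (f ⋙ q).map τ = (f ⋙ q).map (χ₁ ≫ ψ') ≫ eqToHom hm' := by
    rw [hsq, Functor.map_comp, Category.assoc, hχ₂g, Functor.comp_map, Functor.comp_map,
      ← q.map_comp, hg]
  obtain ⟨w, hw, hχ₁w⟩ := hχ₁.exists_vert_comp_eq τ (hψ'.1.trans hm') (by
    rw [hτ, Functor.map_comp, hψ'.2]; simp)
  obtain ⟨v, hv, hχ₂v⟩ := (hf χ₂ hχ₂).exists_vert_comp_eq g hm' hχ₂g
  have hvw : f.map ψ' ≫ v = f.map w :=
    (hf χ₁ hχ₁).hom_ext (Vert.map_eq (Vert.comp (F := q) hψ' hv) hw)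
      (by rw [← Category.assoc, ← f.map_comp, hsq, f.map_comp, Category.assoc, hχ₂v, hg,
        ← f.map_comp, hχ₁w])
  obtain ⟨ζ, ⟨-, hfζ, hψ'ζ⟩, hζ⟩ := hψ'f.2 c w hw v hv hvw
  refine ⟨χ₂ ≫ ζ, ⟨by rw [f.map_comp, hfζ, hχ₂v], ?_⟩, ?_⟩
  · rw [← Category.assoc, ← hsq, Category.assoc, hψ'ζ, hχ₁w]
  rintro ζ' ⟨hfζ', hψζ'⟩
  obtain ⟨u, hu, rfl⟩ := hχ₂.exists_vert_comp_eq ζ' hm' (by rw [hχ₂g, ← hfζ']; rfl)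
  have hfu : f.map u = v :=
    (hf χ₂ hχ₂).hom_ext (Vert.map_eq (F := q) hu hv) (by rw [← f.map_comp, hfζ', hχ₂v])
  have hψ'u : ψ' ≫ u = w :=
    hχ₁.hom_ext (Vert.map_eq (hψ'.comp hu) hw)
      (by rw [← Category.assoc, hsq, Category.assoc, hψζ', hχ₁w])
  rw [hζ u ⟨hu, hfu, hψ'u⟩]

end OverBase

end CocartesianFibration

open CocartesianFibration

theorem cocartFib_of_fiberwise_and_pushforward_general
    {X Y Z : Type*} [Category X] [Category Y] [Category Z]
    (p : X ⥤ Z) (q : Y ⥤ Z) (f : X ⥤ Y) (hover : f ⋙ q = p)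
    (hp : CocartFib p)
    (hpreserves : ∀ {a b : X} (φ : a ⟶ b), Cocart p φ → Cocart q (f.map φ))
    (hfiber : FiberwiseCocartFib p q f)
    (hpush : ∀ {x₁ x₂ y₁ y₂ : X} (ψ : x₁ ⟶ x₂) (χ₁ : x₁ ⟶ y₁) (χ₂ : x₂ ⟶ y₂)
      (ψ' : y₁ ⟶ y₂), FiberCocart p q f ψ → Cocart p χ₁ → Cocart p χ₂ → Vert p ψ' →
        ψ ≫ χ₂ = χ₁ ≫ ψ' → FiberCocart p q f ψ') :
    CocartFib f := by
  subst hover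
  intro x T g₀
  obtain ⟨x₁, χ₀, h₁, hχ₀, hχ₀g⟩ := hp x (q.obj T) (q.map g₀)
  obtain ⟨v, hv, rfl⟩ := (hpreserves χ₀ hχ₀).exists_vert_comp_eq g₀ h₁ hχ₀g
  obtain ⟨x₂, ψ, hT, hψ, rfl⟩ := hfiber x₁ T v hv
  have hχ₀f : Cocart f χ₀ := cocart_of_cocart_comp hχ₀ (hpreserves χ₀ hχ₀)
  have hψf : Cocart f ψ := cocart_of_fiberCocart hp hpreserves hpush hψ
  exact ⟨x₂, χ₀ ≫ ψ, hT, hχ₀f.comp hψf, by rw [f.map_comp, Category.assoc]⟩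

/-- Let `p : X ⥤ Z` and `q : Y ⥤ Z` be cocartesian fibrations and
`f : X ⥤ Y` a functor over `Z` carrying `p`-cocartesian morphisms to `q`-cocartesian
morphisms, such that the induced functor `f_z : X_z ⥤ Y_z` on each fiber is a cocartesian
fibration.  If for every morphism `φ : z ⟶ z'` of `Z` the pushforward `φ_! : X_z ⥤ X_{z'}`
carries `f_z`-cocartesian morphisms to `f_{z'}`-cocartesian morphisms (expressed
morphism-wise: whenever a fiberwise `f`-cocartesian `ψ` and a vertical `ψ'` fit into a
commuting square with two `p`-cocartesian morphisms, then `ψ'` is fiberwise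
`f`-cocartesian), then `f` is a cocartesian fibration. -/
theorem cocartFib_of_fiberwise_and_pushforward
    {X Y Z : Type*} [Category X] [Category Y] [Category Z]
    (p : X ⥤ Z) (q : Y ⥤ Z) (f : X ⥤ Y) (hover : f ⋙ q = p)
    (hp : CocartFib p) (hq : CocartFib q)
    (hpreserves : ∀ {a b : X} (φ : a ⟶ b), Cocart p φ → Cocart q (f.map φ))
    (hfiber : FiberwiseCocartFib p q f)
    (hpush : ∀ {x₁ x₂ y₁ y₂ : X} (ψ : x₁ ⟶ x₂) (χ₁ : x₁ ⟶ y₁) (χ₂ : x₂ ⟶ y₂)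
      (ψ' : y₁ ⟶ y₂), FiberCocart p q f ψ → Cocart p χ₁ → Cocart p χ₂ → Vert p ψ' →
        ψ ≫ χ₂ = χ₁ ≫ ψ' → FiberCocart p q f ψ') :
    CocartFib f :=
  cocartFib_of_fiberwise_and_pushforward_general p q f hover hp hpreserves hfiber hpush
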